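/- Let J be the infinite tridiagonal matrix with first diagonal entry q+r and all other diagonal entries p+q+r, with all superdiagonal entries equal to 1, and with all subdiagonal entries equal to q(p+r). Then J is (p,q,r)-totally positive: every minor of J is a polynomial in p, q, r with nonnegative coefficients. -/

import Mathlib

/-- A multivariable real polynomial is nonnegative if all of its coefficients
are nonnegative. -/
def PolyNonneg {m : ℕ} (f : MvPolynomial (Fin m) ℝ) : Prop :=
  ∀ d : Fin m →₀ ℕ, 0 ≤ f.coeff d

/-- An infinite matrix of multivariable real polynomials is totally positive if
every minor has all nonnegative coefficients. -/
def xTP {m : ℕ} (M : ℕ → ℕ → MvPolynomial (Fin m) ℝ) : Prop :=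
  ∀ (k : ℕ) (r c : Fin k → ℕ), StrictMono r → StrictMono c →
    PolyNonneg (Matrix.det (Matrix.of fun i j => M (r i) (c j)))

/-- The variable `p` in `ℝ[p,q,r]`. -/
noncomputable def P : MvPolynomial (Fin 3) ℝ := MvPolynomial.X 0

/-- The variable `q` in `ℝ[p,q,r]`. -/
noncomputable def Q : MvPolynomial (Fin 3) ℝ := MvPolynomial.X 1

/-- The variable `r` in `ℝ[p,q,r]`. -/
noncomputable def R : MvPolynomial (Fin 3) ℝ := MvPolynomial.X 2

/-! `J = U * L` with `U` upper bidiagonal (diagonal `r, p+r, p+r, …`, superdiagonal `1`) and `L`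
lower bidiagonal (diagonal `1`, subdiagonal `q`). For a tridiagonal matrix with such a
factorization, expanding a minor along its first row or column either splits off one entry, or,
when rows and columns both start with `a, a+1`, gives the recurrence
`X = (u a + ℓ a) Y - ℓ a u (a+1) Z` for the minor `X` and its tails `Y`, `Z`. Hence
`X - u a Y = ℓ a (Y - u (a+1) Z)`, and induction on the size shows that both the minors and the
differences `X - u a Y` of minors starting on the diagonal are nonnegative. -/

namespace Matrix

variable {S : Type*} [CommRing S] {k : ℕ}

theorem det_succ_of_row_zero (A : Matrix (Fin (k + 1)) (Fin (k + 1)) S)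
    (h : ∀ j : Fin k, A 0 j.succ = 0) :
    A.det = A 0 0 * (A.submatrix Fin.succ Fin.succ).det := by
  simp [det_succ_row_zero A, Fin.sum_univ_succ, h]

theorem det_succ_of_col_zero (A : Matrix (Fin (k + 1)) (Fin (k + 1)) S)
    (h : ∀ i : Fin k, A i.succ 0 = 0) :
    A.det = A 0 0 * (A.submatrix Fin.succ Fin.succ).det := by
  simp [det_succ_column_zero A, Fin.sum_univ_succ, h]

theorem det_succ_succ_of_row_col_zero (A : Matrix (Fin (k + 2)) (Fin (k + 2)) S)
    (hrow : ∀ j : Fin k, A 0 j.succ.succ = 0) (hcol : ∀ i : Fin k, A i.succ.succ 0 = 0) :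
    A.det = A 0 0 * (A.submatrix Fin.succ Fin.succ).det
      - A 1 0 * A 0 1 * (A.submatrix (Fin.succ ∘ Fin.succ) (Fin.succ ∘ Fin.succ)).det := by
  have hminor : (A.submatrix (Fin.succAbove 1) Fin.succ).det
      = A 0 1 * (A.submatrix (Fin.succ ∘ Fin.succ) (Fin.succ ∘ Fin.succ)).det := by
    rw [det_succ_of_row_zero]
    · have hsucc (j : Fin k) : (1 : Fin (k + 2)).succAbove j.succ = j.succ.succ :=
        Fin.succ_succAbove_succ 0 j
      simp [Fin.succAbove_ne_zero_zero, submatrix_submatrix, Function.comp_def, hsucc]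
    · simpa [Fin.succAbove_ne_zero_zero] using hrow
  rw [det_succ_column_zero, Fin.sum_univ_succ, Fin.sum_univ_succ]
  simp [hcol, hminor]
  ring

/-- The conditions say that `A` is tridiagonal with entries in `N` and has the same diagonal and
the same products of opposite off-diagonal entries as `U * L`, where `U` is upper bidiagonal with
diagonal `u` and superdiagonal `1`, and `L` is lower bidiagonal with diagonal `1` and
subdiagonal `ℓ`. -/
structure IsTridiagonalUL (N : Subsemiring S) (A : Matrix ℕ ℕ S) (u ℓ : ℕ → S) : Prop where
  mem : ∀ a b, A a b ∈ N
  eq_zero_above : ∀ a b, a + 1 < b → A a b = 0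
  eq_zero_below : ∀ a b, b + 1 < a → A a b = 0
  u_mem : ∀ a, u a ∈ N
  ℓ_mem : ∀ a, ℓ a ∈ N
  diag : ∀ a, A a a = u a + ℓ a
  superdiag_mul_subdiag : ∀ a, A a (a + 1) * A (a + 1) a = ℓ a * u (a + 1)

namespace IsTridiagonalUL

variable {N : Subsemiring S} {A : Matrix ℕ ℕ S} {u ℓ : ℕ → S} (h : IsTridiagonalUL N A u ℓ)
include h

theorem det_submatrix_eq_mul_of_row (r c : Fin (k + 1) → ℕ)
    (hrc : ∀ j : Fin k, r 0 + 1 < c j.succ) :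
    (A.submatrix r c).det = A (r 0) (c 0) * (A.submatrix (r ∘ Fin.succ) (c ∘ Fin.succ)).det :=
  det_succ_of_row_zero _ fun j => h.eq_zero_above _ _ (hrc j)

theorem det_submatrix_eq_mul_of_col (r c : Fin (k + 1) → ℕ)
    (hrc : ∀ i : Fin k, c 0 + 1 < r i.succ) :
    (A.submatrix r c).det = A (r 0) (c 0) * (A.submatrix (r ∘ Fin.succ) (c ∘ Fin.succ)).det :=
  det_succ_of_col_zero _ fun i => h.eq_zero_below _ _ (hrc i)

theorem det_submatrix_eq_of_consecutive {r c : Fin (k + 2) → ℕ} (hr : StrictMono r)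
    (hc : StrictMono c) (h0 : c 0 = r 0) (hr1 : r 1 = r 0 + 1) (hc1 : c 1 = r 0 + 1) :
    (A.submatrix r c).det = (u (r 0) + ℓ (r 0)) * (A.submatrix (r ∘ Fin.succ) (c ∘ Fin.succ)).det
      - ℓ (r 0) * u (r 0 + 1) *
        (A.submatrix (r ∘ Fin.succ ∘ Fin.succ) (c ∘ Fin.succ ∘ Fin.succ)).det := by
  have hsucc (j : Fin k) : (1 : Fin (k + 2)) < j.succ.succ := by
    simp [Fin.lt_def]
  rw [det_succ_succ_of_row_col_zero]
  · simp only [submatrix_apply, h0, hr1, hc1, h.diag, mul_comm (A (r 0 + 1) (r 0)),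
      h.superdiag_mul_subdiag, submatrix_submatrix]
  · intro j
    exact h.eq_zero_above _ _ (by have := hc (hsucc j); omega)
  · intro i
    exact h.eq_zero_below _ _ (by have := hr (hsucc i); omega)

theorem det_submatrix_mem_of_sub_mem
    (hN : ∀ r c : Fin k → ℕ, StrictMono r → StrictMono c → (A.submatrix r c).det ∈ N)
    (hsub : ∀ r c : Fin (k + 1) → ℕ, StrictMono r → StrictMono c → r 0 = c 0 →
      (A.submatrix r c).det - u (r 0) * (A.submatrix (r ∘ Fin.succ) (c ∘ Fin.succ)).det ∈ N)
    (r c : Fin (k + 1) → ℕ) (hr : StrictMono r) (hc : StrictMono c) :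
    (A.submatrix r c).det ∈ N := by
  have htail := hN _ _ (hr.comp Fin.strictMono_succ) (hc.comp Fin.strictMono_succ)
  have hsucc (j : Fin k) : (0 : Fin (k + 1)) < j.succ := Fin.succ_pos j
  rcases lt_trichotomy (r 0) (c 0) with hlt | heq | hgt
  · by_cases hfar : r 0 + 1 < c 0
    · rw [det_eq_zero_of_row_eq_zero (A := A.submatrix r c) 0 fun j =>
        h.eq_zero_above _ _ (hfar.trans_le (hc.monotone (Fin.zero_le j)))]
      exact zero_mem N
    · rw [h.det_submatrix_eq_mul_of_row r c fun j => by have := hc (hsucc j); omega]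
      exact mul_mem (h.mem _ _) htail
  · rw [← sub_add_cancel (A.submatrix r c).det]
    exact add_mem (hsub r c hr hc heq) (mul_mem (h.u_mem _) htail)
  · by_cases hfar : c 0 + 1 < r 0
    · rw [det_eq_zero_of_column_eq_zero (A := A.submatrix r c) 0 fun i =>
        h.eq_zero_below _ _ (hfar.trans_le (hr.monotone (Fin.zero_le i)))]
      exact zero_mem N
    · rw [h.det_submatrix_eq_mul_of_col r c fun i => by have := hr (hsucc i); omega]
      exact mul_mem (h.mem _ _) htail

theorem det_submatrix_sub_mem_fin_one {r c : Fin 1 → ℕ} (h0 : r 0 = c 0) :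
    (A.submatrix r c).det - u (r 0) * (A.submatrix (r ∘ Fin.succ) (c ∘ Fin.succ)).det ∈ N := by
  simp only [det_fin_one, det_fin_zero, submatrix_apply, ← h0, h.diag, mul_one, add_sub_cancel_left]
  exact h.ℓ_mem _

theorem det_submatrix_sub_mem_of_succ
    (hN : ∀ r c : Fin (k + 1) → ℕ, StrictMono r → StrictMono c → (A.submatrix r c).det ∈ N)
    (hsub : ∀ r c : Fin (k + 1) → ℕ, StrictMono r → StrictMono c → r 0 = c 0 →
      (A.submatrix r c).det - u (r 0) * (A.submatrix (r ∘ Fin.succ) (c ∘ Fin.succ)).det ∈ N)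
    (r c : Fin (k + 2) → ℕ) (hr : StrictMono r) (hc : StrictMono c) (h0 : r 0 = c 0) :
    (A.submatrix r c).det - u (r 0) * (A.submatrix (r ∘ Fin.succ) (c ∘ Fin.succ)).det ∈ N := by
  have htail := hN _ _ (hr.comp Fin.strictMono_succ) (hc.comp Fin.strictMono_succ)
  have hsub_of_single (hdet : (A.submatrix r c).det
      = A (r 0) (c 0) * (A.submatrix (r ∘ Fin.succ) (c ∘ Fin.succ)).det) :
      (A.submatrix r c).det - u (r 0) * (A.submatrix (r ∘ Fin.succ) (c ∘ Fin.succ)).det ∈ N := by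
    rw [hdet, ← h0, h.diag, ← sub_mul, add_sub_cancel_left]
    exact mul_mem (h.ℓ_mem _) htail
  have hone (j : Fin (k + 1)) : (1 : Fin (k + 2)) ≤ j.succ := by
    simp [Fin.le_def]
  by_cases hcfar : r 0 + 1 < c 1
  · exact hsub_of_single <| h.det_submatrix_eq_mul_of_row r c fun j =>
      hcfar.trans_le (hc.monotone (hone j))
  by_cases hrfar : c 0 + 1 < r 1
  · exact hsub_of_single <| h.det_submatrix_eq_mul_of_col r c fun i =>
      hrfar.trans_le (hr.monotone (hone i))
  have hr1 : r 1 = r 0 + 1 := by have := hr (Fin.zero_lt_one : (0 : Fin (k + 2)) < 1); omega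
  have hc1 : c 1 = r 0 + 1 := by have := hc (Fin.zero_lt_one : (0 : Fin (k + 2)) < 1); omega
  have htail_sub := hsub _ _ (hr.comp Fin.strictMono_succ) (hc.comp Fin.strictMono_succ)
    (by simp [hr1, hc1])
  rw [h.det_submatrix_eq_of_consecutive hr hc h0.symm hr1 hc1]
  convert mul_mem (h.ℓ_mem (r 0)) htail_sub using 1
  simp only [Function.comp_apply, Fin.succ_zero_eq_one, hr1, Function.comp_assoc]
  ring

theorem det_submatrix_mem_and_sub_mem (k : ℕ) :
    (∀ r c : Fin k → ℕ, StrictMono r → StrictMono c → (A.submatrix r c).det ∈ N) ∧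
    (∀ r c : Fin (k + 1) → ℕ, StrictMono r → StrictMono c → r 0 = c 0 →
      (A.submatrix r c).det - u (r 0) * (A.submatrix (r ∘ Fin.succ) (c ∘ Fin.succ)).det ∈ N) := by
  induction k with
  | zero => exact ⟨fun r c _ _ => by simp [one_mem], fun r c _ _ => h.det_submatrix_sub_mem_fin_one⟩
  | succ k ih =>
    have hN := h.det_submatrix_mem_of_sub_mem ih.1 ih.2
    exact ⟨hN, h.det_submatrix_sub_mem_of_succ hN ih.2⟩

theorem det_submatrix_mem {r c : Fin k → ℕ} (hr : StrictMono r) (hc : StrictMono c) :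
    (A.submatrix r c).det ∈ N :=
  (h.det_submatrix_mem_and_sub_mem k).1 r c hr hc

end IsTridiagonalUL

end Matrix

def PolyNonneg.subsemiring (m : ℕ) : Subsemiring (MvPolynomial (Fin m) ℝ) where
  carrier := {f | PolyNonneg f}
  mul_mem' {f g} hf hg d := by
    rw [MvPolynomial.coeff_mul]
    exact Finset.sum_nonneg fun x _ => mul_nonneg (hf _) (hg _)
  one_mem' d := by
    rw [MvPolynomial.coeff_one]
    split_ifs <;> norm_num
  add_mem' {f g} hf hg d := by
    rw [MvPolynomial.coeff_add]
    exact add_nonneg (hf d) (hg d)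
  zero_mem' d := by simp

theorem PolyNonneg.X_mem_subsemiring {m : ℕ} (i : Fin m) :
    MvPolynomial.X i ∈ PolyNonneg.subsemiring m := fun d => by
  rw [MvPolynomial.coeff_X]
  split_ifs <;> norm_num

noncomputable def J : Matrix ℕ ℕ (MvPolynomial (Fin 3) ℝ) :=
  Matrix.of fun a b =>
    if a = b then (if a = 0 then Q + R else P + Q + R)
    else if b = a + 1 then 1
    else if a = b + 1 then Q * (P + R)
    else 0

theorem J_isTridiagonalUL :
    Matrix.IsTridiagonalUL (PolyNonneg.subsemiring 3) J (fun a => if a = 0 then R else P + R)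
      (fun _ => Q) := by
  have hP : P ∈ PolyNonneg.subsemiring 3 := PolyNonneg.X_mem_subsemiring _
  have hQ : Q ∈ PolyNonneg.subsemiring 3 := PolyNonneg.X_mem_subsemiring _
  have hR : R ∈ PolyNonneg.subsemiring 3 := PolyNonneg.X_mem_subsemiring _
  refine ⟨fun a b => ?_, fun a b hab => ?_, fun a b hab => ?_, fun a => ?_, fun _ => hQ,
    fun a => ?_, fun a => ?_⟩
  · simp only [J, Matrix.of_apply]
    split_ifs <;> simp [add_mem, mul_mem, one_mem, zero_mem, *]
  · simp only [J, Matrix.of_apply]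
    split_ifs <;> first | rfl | omega
  · simp only [J, Matrix.of_apply]
    split_ifs <;> first | rfl | omega
  · split_ifs <;> simp [add_mem, *]
  · simp only [J, Matrix.of_apply]; split_ifs <;> ring
  · simp [J]
    omega

/-- In Example 3.5: the tridiagonal matrix with diagonal
`(q + r, p + q + r, p + q + r, …)`, superdiagonal `(1, 1, …)` and subdiagonal
`(q(p+r), q(p+r), …)` is `(p,q,r)`-totally positive. -/
theorem example35_J_xTP :
    xTP (fun a b =>
      if a = b then (if a = 0 then Q + R else P + Q + R)
      else if b = a + 1 then 1
      else if a = b + 1 then Q * (P + R)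
      else (0 : MvPolynomial (Fin 3) ℝ)) :=
  fun _ _ _ hr hc => J_isTridiagonalUL.det_submatrix_mem hr hc
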